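/- Let G be a group, m ≥ 1, and a : Fin m → G a tuple such that the induced homomorphism π = FreeGroup.lift a : FreeGroup (Fin m) → G is surjective. Suppose every m-tuple of elements of G that generates G is Nielsen-equivalent in G to a. Then every automorphism of G is induced by an automorphism of the free group: for every φ ∈ MulAut G there exists α ∈ MulAut (FreeGroup (Fin m)) such that φ ∘ π = π ∘ α as homomorphisms FreeGroup (Fin m) → G. -/
import Mathlib


/-- An elementary Nielsen move on an `m`-tuple of elements of a group `G`:
replace some `gᵢ` by `gᵢ⁻¹`, or interchange `gᵢ` and `gⱼ` for some `i ≠ j`,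
or replace `gᵢ` by `gᵢ * gⱼ` for some `i ≠ j`. -/
def NielsenMove {G : Type*} [Group G] {m : ℕ} (τ τ' : Fin m → G) : Prop :=
  (∃ i, τ' = Function.update τ i (τ i)⁻¹) ∨
  (∃ i j, i ≠ j ∧ τ' = τ ∘ Equiv.swap i j) ∨
  (∃ i j, i ≠ j ∧ τ' = Function.update τ i (τ i * τ j))

/-- Two `m`-tuples are Nielsen-equivalent in `G` if one is obtained from the
other by a finite chain of elementary Nielsen moves. -/
def NielsenEquiv {G : Type*} [Group G] {m : ℕ} (τ τ' : Fin m → G) : Prop :=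
  Relation.ReflTransGen NielsenMove τ τ'

/-- The free-group automorphism inverting the `i`-th generator. -/
def nielsenInvAut {m : ℕ} (i : Fin m) : MulAut (FreeGroup (Fin m)) :=
  MonoidHom.toMulEquiv
    (FreeGroup.lift (Function.update FreeGroup.of i (FreeGroup.of i)⁻¹))
    (FreeGroup.lift (Function.update FreeGroup.of i (FreeGroup.of i)⁻¹))
    (by
      apply FreeGroup.ext_hom; intro k
      by_cases h : k = i <;> simp [h, Function.update_apply])
    (by
      apply FreeGroup.ext_hom; intro k
      by_cases h : k = i <;> simp [h, Function.update_apply])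

/-- The free-group automorphism sending `of i ↦ of i * of j`. -/
def nielsenMulAut {m : ℕ} (i j : Fin m) (hij : i ≠ j) : MulAut (FreeGroup (Fin m)) :=
  MonoidHom.toMulEquiv
    (FreeGroup.lift (Function.update FreeGroup.of i (FreeGroup.of i * FreeGroup.of j)))
    (FreeGroup.lift (Function.update FreeGroup.of i (FreeGroup.of i * (FreeGroup.of j)⁻¹)))
    (by
      apply FreeGroup.ext_hom; intro k
      by_cases h : k = i <;>
        simp [h, Function.update_apply, hij, (Ne.symm hij)])
    (by
      apply FreeGroup.ext_hom; intro k
      by_cases h : k = i <;>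
        simp [h, Function.update_apply, hij, (Ne.symm hij)])

theorem nielsen_move_lift {G : Type*} [Group G] {m : ℕ} {τ τ' : Fin m → G}
    (h : NielsenMove τ τ') :
    ∃ β : MulAut (FreeGroup (Fin m)),
      FreeGroup.lift τ' = (FreeGroup.lift τ).comp β.toMonoidHom := by
  rcases h with ⟨i, rfl⟩ | ⟨i, j, hij, rfl⟩ | ⟨i, j, hij, rfl⟩
  · refine ⟨nielsenInvAut i, ?_⟩
    apply FreeGroup.ext_hom; intro k
    by_cases h : k = i <;>
      simp [h, nielsenInvAut, Function.update_apply]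
  · refine ⟨(FreeGroup.freeGroupCongr (Equiv.swap i j)), ?_⟩
    apply FreeGroup.ext_hom; intro k
    simp
  · refine ⟨nielsenMulAut i j hij, ?_⟩
    apply FreeGroup.ext_hom; intro k
    by_cases h : k = i <;>
      simp [h, nielsenMulAut, Function.update_apply, hij, Ne.symm hij]

theorem nielsen_equiv_lift {G : Type*} [Group G] {m : ℕ} {τ τ' : Fin m → G}
    (h : NielsenEquiv τ τ') :
    ∃ β : MulAut (FreeGroup (Fin m)),
      FreeGroup.lift τ' = (FreeGroup.lift τ).comp β.toMonoidHom := by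
  induction h with
  | refl => exact ⟨MulEquiv.refl _, rfl⟩
  | tail _ hmove ih =>
      obtain ⟨α, hα⟩ := ih
      obtain ⟨β, hβ⟩ := nielsen_move_lift hmove
      refine ⟨α * β, ?_⟩
      rw [hβ, hα]
      rfl

/-- If every generating `m`-tuple of `G` is Nielsen-equivalent to `a`, then every
automorphism of `G` is induced by an automorphism of the free group of rank `m`. -/
theorem aut_induced_by_free_aut {G : Type*} [Group G] {m : ℕ} (hm : 1 ≤ m)
    (a : Fin m → G) (hsurj : Function.Surjective (FreeGroup.lift a))
    (hNU : ∀ τ : Fin m → G, Subgroup.closure (Set.range τ) = ⊤ → NielsenEquiv τ a)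
    (φ : MulAut G) :
    ∃ α : MulAut (FreeGroup (Fin m)),
      φ.toMonoidHom.comp (FreeGroup.lift a) =
        (FreeGroup.lift a).comp α.toMonoidHom := by
  have hclos : Subgroup.closure (Set.range a) = ⊤ := by
    rw [← FreeGroup.range_lift_eq_closure, MonoidHom.range_eq_top]
    exact hsurj
  have hgen : Subgroup.closure (Set.range (φ ∘ a)) = ⊤ := by
    have : Set.range (φ ∘ a) = φ '' Set.range a := by
      rw [Set.range_comp]
    have h2 : Subgroup.map φ.toMonoidHom (Subgroup.closure (Set.range a)) =
        Subgroup.closure (⇑φ '' Set.range a) := MonoidHom.map_closure _ _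
    rw [this, ← h2, hclos]
    exact Subgroup.map_top_of_surjective _ φ.surjective
  obtain ⟨β, hβ⟩ := nielsen_equiv_lift (hNU (φ ∘ a) hgen)
  have hφa : FreeGroup.lift (φ ∘ a) = φ.toMonoidHom.comp (FreeGroup.lift a) := by
    apply FreeGroup.ext_hom; intro k; simp
  refine ⟨β⁻¹, ?_⟩
  rw [← hφa]
  apply FreeGroup.ext_hom; intro k
  have := congrArg (fun f => (f : FreeGroup (Fin m) →* G) (β⁻¹ (FreeGroup.of k))) hβ
  simpa using this.symm
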